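/- Let Ω be a nonempty open subset of ℝ^{n+1} (n ≥ 1) with nonempty topological boundary ∂Ω and with finite Lebesgue measure, and let u(y) = dist(y, ∂Ω). Then for (Lebesgue) almost every s > 0 one has ℋⁿ(Γ_s^+) = ℋⁿ(∂Ω_s), i.e. ℋⁿ(∂Ω_s \ Γ_s^+) = 0, where ∂Ω_s = {y ∈ Ω : u(y) = s} and ℋⁿ is the n-dimensional Hausdorff measure. -/

import Mathlib

/-!
For `0 < s ≤ t`, send each `y ∈ ∂Ω_t` to the point at distance `s` from a nearest boundary point
`x` on the segment `[x, y]`. The image lies in `Γ_s^t`, and since nearest-point maps satisfy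
`⟪x₁ - x₂, (y₁ - x₁) - (y₂ - x₂)⟫ ≥ -‖x₁ - x₂‖²`, this map shrinks distances by a factor of
at most `s / t`. Hence `sⁿ ℋⁿ(∂Ω_t) ≤ tⁿ ℋⁿ(Γ_s^t) ≤ tⁿ ℋⁿ(∂Ω_s)`: the ratio
`φ(σ) = ℋⁿ(∂Ω_σ) / σⁿ` (`levelRatio`) is antitone, so it is continuous outside a countable set,
and at a continuity point `s` with `ℋⁿ(∂Ω_s) < ∞` we get
`ℋⁿ(∂Ω_s \ Γ_s^+) ≤ ℋⁿ(∂Ω_s) - sⁿ φ(t) → 0` as `t ↓ s`.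

`ℋⁿ(∂Ω_s)` is finite for a.e. `s`: the volume of `{y ∈ Ω | u y ≤ σ}` is monotone in `σ`, hence
differentiable a.e., and at such `s` the slabs `{s - ε < u ≤ s}` have volume `O(ε)`. Pushing an
`ε`-separated subset of `∂Ω_s` inwards by `ε / 2` yields disjoint `ε / 4`-balls in that slab, so
`∂Ω_s` has `ε`-packings of size `O(ε⁻ⁿ)`.
-/

open RealInnerProductSpace Metric Set MeasureTheory Filter
open scoped ENNReal NNReal Topology

section Homothety

variable {E : Type*} [NormedAddCommGroup E] [InnerProductSpace ℝ E]

theorem mul_dist_le_dist_homothety {x₁ x₂ y₁ y₂ : E} {c : ℝ} (hc₀ : 0 ≤ c) (hc₁ : c ≤ 1)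
    (h₁ : dist y₁ x₁ ≤ dist y₁ x₂) (h₂ : dist y₂ x₂ ≤ dist y₂ x₁) :
    c * dist y₁ y₂ ≤ dist (x₁ + c • (y₁ - x₁)) (x₂ + c • (y₂ - x₂)) := by
  simp only [dist_eq_norm] at *
  set a := x₁ - x₂
  set q := (y₁ - x₁) - (y₂ - x₂)
  have hy : y₁ - y₂ = a + q := by simp only [a, q]; abel
  have hw : (x₁ + c • (y₁ - x₁)) - (x₂ + c • (y₂ - x₂)) = a + c • q := by simp only [a, q]; module
  -- add the squares of the two nearest-point conditions
  have hq : 0 ≤ ⟪a, q⟫ + ‖a‖ ^ 2 := by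
    have e₁ : y₁ - x₂ = (y₁ - x₁) + a := by simp only [a]; abel
    have e₂ : y₂ - x₁ = (y₂ - x₂) - a := by simp only [a]; abel
    rw [e₁] at h₁
    rw [e₂] at h₂
    have s₁ := pow_le_pow_left₀ (norm_nonneg _) h₁ 2
    have s₂ := pow_le_pow_left₀ (norm_nonneg _) h₂ 2
    rw [norm_add_sq_real (y₁ - x₁) a] at s₁
    rw [norm_sub_sq_real (y₂ - x₂) a] at s₂
    have : ⟪a, q⟫ = ⟪y₁ - x₁, a⟫ - ⟪y₂ - x₂, a⟫ := by
      rw [inner_sub_right, real_inner_comm a, real_inner_comm a]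
    linarith
  rw [hy, hw]
  refine (pow_le_pow_iff_left₀ (by positivity) (norm_nonneg _) two_ne_zero).1 ?_
  rw [mul_pow, norm_add_sq_real, norm_add_sq_real, norm_smul, inner_smul_right,
    Real.norm_of_nonneg hc₀]
  nlinarith [mul_nonneg (mul_nonneg hc₀ (sub_nonneg.2 hc₁)) hq,
    mul_nonneg (sq_nonneg (1 - c)) (sq_nonneg ‖a‖)]

end Homothety

section MetricSpace

variable {X : Type*} [MetricSpace X]

theorem IsClosed.exists_infDist_eq_dist_of_infDist_pos [ProperSpace X]
    {K : Set X} (hK : IsClosed K) {y : X} (hy : 0 < infDist y K) :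
    ∃ x ∈ K, infDist y K = dist y x := by
  refine hK.exists_infDist_eq_dist (nonempty_iff_ne_empty.2 fun h => ?_) y
  simp [h] at hy

/-- `∂Ω_t`. -/
def distLevel (Ω : Set X) (t : ℝ) : Set X := {y | y ∈ Ω ∧ infDist y (frontier Ω) = t}

theorem isClosed_distLevel {Ω : Set X} (hΩ : IsOpen Ω) {t : ℝ} (ht : t ≠ 0) :
    IsClosed (distLevel Ω t) := by
  have : distLevel Ω t = closure Ω ∩ (infDist · (frontier Ω)) ⁻¹' {t} := by
    refine Subset.antisymm (fun y hy => ⟨subset_closure hy.1, hy.2⟩)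
      fun y ⟨hyc, hyt⟩ => ⟨?_, hyt⟩
    rw [← hΩ.interior_eq, ← closure_sdiff_frontier]
    exact ⟨hyc, fun hyf => ht (hyt.symm.trans (infDist_zero_of_mem hyf))⟩
  rw [this]
  exact isClosed_closure.inter (isClosed_singleton.preimage (continuous_infDist_pt _))

end MetricSpace

section DistanceToFrontier

variable {E : Type*} [NormedAddCommGroup E] [NormedSpace ℝ E] {Ω : Set E}

/-- `Γ_s^t`. -/
def gammaLevel (Ω : Set E) (s t : ℝ) : Set E :=
  {y | ∃ x z, x ∈ frontier Ω ∧ z ∈ Ω ∧ infDist z (frontier Ω) = t ∧ ‖x - z‖ = t ∧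
    y = x + (s / t) • (z - x)}

theorem ball_infDist_frontier_subset (hΩ : IsOpen Ω) {z : E} (hz : z ∈ Ω) :
    ball z (infDist z (frontier Ω)) ⊆ Ω := by
  rcases (infDist_nonneg (x := z) (s := frontier Ω)).eq_or_lt with h | h
  · simp [← h]
  refine (convex_ball _ _).isPreconnected.subset_of_closure_inter_subset hΩ
    ⟨z, mem_ball_self h, hz⟩ fun w ⟨hwc, hwb⟩ => ?_
  by_contra hwΩ
  have : w ∈ frontier Ω := by rw [hΩ.frontier_eq]; exact ⟨hwc, hwΩ⟩
  exact (infDist_le_dist_of_mem this).not_gt (by rwa [mem_ball, dist_comm] at hwb)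

theorem homothety_mem_distLevel (hΩ : IsOpen Ω) {x z : E} {r t : ℝ} (hx : x ∈ frontier Ω)
    (hz : z ∈ distLevel Ω t) (hxz : ‖x - z‖ = t) (hr : 0 < r) (hrt : r ≤ t) :
    x + (r / t) • (z - x) ∈ distLevel Ω r := by
  have ht : 0 < t := hr.trans_le hrt
  set p := x + (r / t) • (z - x)
  have hpx : dist p x = r := by
    rw [dist_eq_norm, add_sub_cancel_left, norm_smul, norm_sub_rev z x, hxz,
      Real.norm_of_nonneg (by positivity), div_mul_cancel₀ r ht.ne']
  have hzp : dist z p = t - r := by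
    have : z - p = (1 - r / t) • (z - x) := by simp only [p]; module
    rw [dist_eq_norm, this, norm_smul, norm_sub_rev z x, hxz,
      Real.norm_of_nonneg (sub_nonneg.2 ((div_le_one ht).2 hrt))]
    field_simp
  have hp_le : infDist p (frontier Ω) ≤ r := hpx ▸ infDist_le_dist_of_mem hx
  have hp_ge : t ≤ infDist p (frontier Ω) + (t - r) := by
    simpa only [hz.2, hzp] using infDist_le_infDist_add_dist (x := z) (y := p) (s := frontier Ω)
  refine ⟨ball_infDist_frontier_subset hΩ hz.1 ?_, by linarith⟩
  rw [mem_ball, dist_comm, hzp, hz.2]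
  linarith

theorem ball_subset_inter_preimage_Ioo (hΩ : IsOpen Ω) {q : E} {r ρ : ℝ}
    (hq : q ∈ distLevel Ω r) (hρ : ρ ≤ r) :
    ball q ρ ⊆ Ω ∩ (infDist · (frontier Ω)) ⁻¹' Ioo (r - ρ) (r + ρ) := by
  intro w hw
  have h₁ := infDist_le_infDist_add_dist (x := w) (y := q) (s := frontier Ω)
  have h₂ := infDist_le_infDist_add_dist (x := q) (y := w) (s := frontier Ω)
  rw [mem_ball] at hw
  rw [dist_comm, hq.2] at h₂
  rw [hq.2] at h₁
  refine ⟨ball_infDist_frontier_subset hΩ hq.1 (ball_subset_ball (hq.2 ▸ hρ) hw), ?_, ?_⟩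
  · show r - ρ < infDist w (frontier Ω); linarith
  · show infDist w (frontier Ω) < r + ρ; linarith

theorem gammaLevel_subset_distLevel (hΩ : IsOpen Ω) {s t : ℝ} (hs : 0 < s) (hst : s ≤ t) :
    gammaLevel Ω s t ⊆ distLevel Ω s := by
  rintro _ ⟨x, z, hx, hzΩ, hzt, hxz, rfl⟩
  exact homothety_mem_distLevel hΩ hx ⟨hzΩ, hzt⟩ hxz hs hst

theorem measurableSet_gammaLevel [ProperSpace E] [MeasurableSpace E] [BorelSpace E]
    (hΩ : IsOpen Ω) (s : ℝ) {t : ℝ} (ht : 0 < t) : MeasurableSet (gammaLevel Ω s t) := by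
  set W : Set (E × E) := {p | p.1 ∈ frontier Ω ∧ p.2 ∈ distLevel Ω t ∧ ‖p.1 - p.2‖ = t}
  have hW : IsClosed W :=
    (isClosed_frontier.preimage continuous_fst).inter
      (((isClosed_distLevel hΩ ht.ne').preimage continuous_snd).inter
        (isClosed_eq (by fun_prop) continuous_const))
  have himage : gammaLevel Ω s t = (fun p : E × E => p.1 + (s / t) • (p.2 - p.1)) '' W := by
    ext y
    constructor
    · rintro ⟨x, z, hx, hzΩ, hzt, hxz, rfl⟩
      exact ⟨(x, z), ⟨hx, ⟨hzΩ, hzt⟩, hxz⟩, rfl⟩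
    · rintro ⟨⟨x, z⟩, ⟨hx, ⟨hzΩ, hzt⟩, hxz⟩, rfl⟩
      exact ⟨x, z, hx, hzΩ, hzt, hxz, rfl⟩
  obtain ⟨K, hK, hKW⟩ :=
    (isSigmaCompact_univ.of_isClosed_subset hW (subset_univ W)).image (f :=
      fun p : E × E => p.1 + (s / t) • (p.2 - p.1)) (by fun_prop)
  rw [himage, ← hKW]
  exact MeasurableSet.iUnion fun n => (hK n).measurableSet

end DistanceToFrontier

theorem ENNReal.ofReal_rpow_ne_zero {d σ : ℝ} (hσ : 0 < σ) : ENNReal.ofReal σ ^ d ≠ 0 :=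
  (ENNReal.rpow_pos (ENNReal.ofReal_pos.2 hσ) ENNReal.ofReal_ne_top).ne'

theorem ENNReal.ofReal_rpow_ne_top {d : ℝ} (hd : 0 ≤ d) {σ : ℝ} : ENNReal.ofReal σ ^ d ≠ ∞ :=
  ENNReal.rpow_ne_top_of_nonneg hd ENNReal.ofReal_ne_top

theorem hausdorffMeasure_le_mul_hausdorffMeasure_image {X Y : Type*} [MetricSpace X]
    [MeasurableSpace X] [BorelSpace X] [MetricSpace Y] [MeasurableSpace Y] [BorelSpace Y]
    {d : ℝ} (hd : 0 ≤ d) {K : ℝ≥0} {f : X → Y} {s : Set X}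
    (hf : ∀ a ∈ s, ∀ b ∈ s, dist a b ≤ K * dist (f a) (f b)) :
    μH[d] s ≤ (K : ℝ≥0∞) ^ d * μH[d] (f '' s) := by
  have hg : AntilipschitzWith K (s.domRestrict f) :=
    AntilipschitzWith.of_le_mul_dist fun a b => hf a a.2 b b.2
  have := hg.le_hausdorffMeasure_image hd univ
  rwa [image_univ, range_domRestrict, ← isometry_subtype_coe.hausdorffMeasure_image (Or.inl hd),
    image_univ, Subtype.range_coe] at this

theorem Set.PairwiseDisjoint.encard_mul_le_measure {α ι : Type*} [MeasurableSpace α]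
    {μ : Measure α} {C : Set ι} {f : ι → Set α} {b : ℝ≥0∞} {S : Set α}
    (hdisj : C.PairwiseDisjoint f) (hmeas : ∀ i ∈ C, MeasurableSet (f i))
    (hb : ∀ i ∈ C, b ≤ μ (f i)) (hS : ∀ i ∈ C, f i ⊆ S) :
    (C.encard : ℝ≥0∞) * b ≤ μ S :=
  calc (C.encard : ℝ≥0∞) * b = ∑' _ : C, b := (ENNReal.tsum_set_const C b).symm
    _ ≤ ∑' i : C, μ (f i) := ENNReal.tsum_le_tsum fun i => hb i i.2
    _ ≤ μ (⋃ i : C, f i) := tsum_meas_le_meas_iUnion_of_disjoint μ (fun i => hmeas i i.2)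
        fun i j hij => hdisj i.2 j.2 (Subtype.coe_ne_coe.2 hij)
    _ ≤ μ S := measure_mono (iUnion_subset fun i => hS i i.2)

theorem Metric.packingNumber_mul_le_iff {X : Type*} [PseudoEMetricSpace X] {ε : ℝ≥0} {A : Set X}
    {b V : ℝ≥0∞} :
    (packingNumber ε A : ℝ≥0∞) * b ≤ V ↔
      ∀ C ⊆ A, IsSeparated ε C → (C.encard : ℝ≥0∞) * b ≤ V := by
  simp [packingNumber, ENNReal.iSup_mul]

theorem Metric.finite_maximalSeparatedSet {X : Type*} [PseudoEMetricSpace X] (ε : ℝ≥0)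
    (A : Set X) : (maximalSeparatedSet ε A).Finite := by
  unfold maximalSeparatedSet
  split_ifs with h
  exacts [(exists_set_encard_eq_packingNumber h).choose_spec.2.1, finite_empty]

theorem hausdorffMeasure_le_of_packingNumber_mul_le {X : Type*} [EMetricSpace X]
    [MeasurableSpace X] [BorelSpace X] {d : ℝ} (hd : 0 ≤ d) {A : Set X} {M : ℝ≥0∞}
    (h : ∀ᶠ ε : ℝ≥0 in 𝓝[>] 0, (packingNumber ε A : ℝ≥0∞) * (2 * ε) ^ d ≤ M) :
    μH[d] A ≤ M := by
  rcases eq_or_ne M ∞ with rfl | hM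
  · exact le_top
  have hpack : ∀ᶠ ε : ℝ≥0 in 𝓝[>] 0, packingNumber ε A ≠ ⊤ := by
    filter_upwards [h, self_mem_nhdsWithin] with ε hε (hε₀ : 0 < ε) htop
    rw [htop, ENat.toENNReal_top, ENNReal.top_mul (ENNReal.rpow_pos (by simpa using hε₀)
      (ENNReal.mul_ne_top ENNReal.ofNat_ne_top ENNReal.coe_ne_top)).ne'] at hε
    exact hM (top_le_iff.1 hε)
  have : ∀ ε : ℝ≥0, Countable (maximalSeparatedSet ε A) :=
    fun ε => (finite_maximalSeparatedSet ε A).countable.to_subtype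
  have hr : Tendsto (fun ε : ℝ≥0 => 2 * (ε : ℝ≥0∞)) (𝓝[>] 0) (𝓝 0) := by
    have := ((ENNReal.continuous_const_mul (show (2 : ℝ≥0∞) ≠ ∞ by simp)).comp
      ENNReal.continuous_coe).tendsto (0 : ℝ≥0)
    simpa [Function.comp_def] using this.mono_left nhdsWithin_le_nhds
  refine (Measure.hausdorffMeasure_le_liminf_tsum d A _ hr
    (fun ε (i : maximalSeparatedSet ε A) => closedEBall (i : X) ε)
    (Eventually.of_forall fun ε i => ediam_closedEBall_le) ?_).trans ?_
  · filter_upwards [hpack] with ε hε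
    rw [iUnion_coe_set, ← isCover_iff_subset_iUnion_closedEBall]
    exact isCover_maximalSeparatedSet hε
  · refine liminf_le_of_frequently_le' (Eventually.frequently ?_)
    filter_upwards [h, hpack] with ε hε hεtop
    calc ∑' i : maximalSeparatedSet ε A, ediam (closedEBall (i : X) ε) ^ d
        ≤ ∑' _ : maximalSeparatedSet ε A, (2 * (ε : ℝ≥0∞)) ^ d :=
          ENNReal.tsum_le_tsum fun i => ENNReal.rpow_le_rpow ediam_closedEBall_le hd
      _ = (packingNumber ε A : ℝ≥0∞) * (2 * ε) ^ d := by
          rw [ENNReal.tsum_set_const, encard_maximalSeparatedSet hεtop]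
      _ ≤ M := hε

theorem eventually_measure_preimage_Ioc_le_of_differentiableAt {X : Type*} [MeasurableSpace X]
    {ν : Measure X} [IsFiniteMeasure ν] {f : X → ℝ} (hf : Measurable f) {s : ℝ}
    (h : DifferentiableAt ℝ (fun σ => ν.real (f ⁻¹' Iic σ)) s) :
    ∃ C : ℝ≥0, ∀ᶠ ε : ℝ≥0 in 𝓝 0, ν (f ⁻¹' Ioc (s - ε) s) ≤ C * ε := by
  obtain ⟨c, hc⟩ := h.hasDerivAt.isBigO_sub.bound
  have hshift : Tendsto (fun ε : ℝ≥0 => s - ε) (𝓝 0) (𝓝 s) := by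
    simpa using (tendsto_const_nhds (x := s)).sub (NNReal.continuous_coe.tendsto 0)
  refine ⟨c.toNNReal, ?_⟩
  filter_upwards [hshift.eventually hc] with ε hε
  have hsub : f ⁻¹' Iic (s - ε) ⊆ f ⁻¹' Iic s :=
    preimage_mono (Iic_subset_Iic.2 (sub_le_self s ε.2))
  rw [← ofReal_measureReal, ← Iic_sdiff_Iic, preimage_sdiff,
    measureReal_sdiff hsub (hf measurableSet_Iic), ← ENNReal.ofReal_coe_nnreal,
    ← ENNReal.ofReal_coe_nnreal (p := ε), ← ENNReal.ofReal_mul (by positivity)]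
  refine ENNReal.ofReal_le_ofReal ?_
  simp only [Real.norm_eq_abs, sub_sub_cancel_left, abs_neg, NNReal.abs_eq] at hε
  rw [abs_sub_comm] at hε
  exact (le_abs_self _).trans (hε.trans (mul_le_mul_of_nonneg_right (Real.le_coe_toNNReal c) ε.2))

section InnerProductSpace

variable {E : Type*} [NormedAddCommGroup E] [InnerProductSpace ℝ E] [ProperSpace E]
  [MeasurableSpace E] [BorelSpace E] {Ω : Set E} {d : ℝ}

theorem rpow_mul_hausdorffMeasure_distLevel_le {s t : ℝ} (hd : 0 ≤ d) (hs : 0 < s)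
    (hst : s ≤ t) :
    ENNReal.ofReal s ^ d * μH[d] (distLevel Ω t) ≤
      ENNReal.ofReal t ^ d * μH[d] (gammaLevel Ω s t) := by
  have ht : 0 < t := hs.trans_le hst
  choose! x hx hxy using fun y (hy : y ∈ distLevel Ω t) =>
    isClosed_frontier.exists_infDist_eq_dist_of_infDist_pos (hy.2.symm ▸ ht)
  set f : E → E := fun y => x y + (s / t) • (y - x y)
  have hf : ∀ a ∈ distLevel Ω t, ∀ b ∈ distLevel Ω t,
      dist a b ≤ (t / s).toNNReal * dist (f a) (f b) := by
    intro a ha b hb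
    have key := mul_dist_le_dist_homothety (div_nonneg hs.le ht.le) ((div_le_one ht).2 hst)
      (hxy a ha ▸ infDist_le_dist_of_mem (hx b hb)) (hxy b hb ▸ infDist_le_dist_of_mem (hx a ha))
    rw [Real.coe_toNNReal _ (by positivity), div_mul_eq_mul_div, le_div_iff₀ hs]
    rw [div_mul_eq_mul_div, div_le_iff₀ ht] at key
    linarith
  have hfΓ : f '' distLevel Ω t ⊆ gammaLevel Ω s t := by
    rintro _ ⟨y, hy, rfl⟩
    exact ⟨x y, y, hx y hy, hy.1, hy.2, by rw [← dist_eq_norm, dist_comm, ← hxy y hy, hy.2], rfl⟩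
  have hle : μH[d] (distLevel Ω t) ≤ ENNReal.ofReal (t / s) ^ d * μH[d] (gammaLevel Ω s t) :=
    (hausdorffMeasure_le_mul_hausdorffMeasure_image hd hf).trans (by gcongr; exact le_rfl)
  calc ENNReal.ofReal s ^ d * μH[d] (distLevel Ω t)
      ≤ ENNReal.ofReal s ^ d * (ENNReal.ofReal (t / s) ^ d * μH[d] (gammaLevel Ω s t)) := by
        gcongr
    _ = ENNReal.ofReal t ^ d * μH[d] (gammaLevel Ω s t) := by
        rw [← mul_assoc, ← ENNReal.mul_rpow_of_nonneg _ _ hd, ← ENNReal.ofReal_mul hs.le,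
          mul_div_cancel₀ t hs.ne']

noncomputable def levelRatio (Ω : Set E) (d σ : ℝ) : ℝ≥0∞ :=
  μH[d] (distLevel Ω σ) / ENNReal.ofReal σ ^ d

theorem rpow_mul_levelRatio_le (hd : 0 ≤ d) {s t : ℝ} (hs : 0 < s) (hst : s ≤ t) :
    ENNReal.ofReal s ^ d * levelRatio Ω d t ≤ μH[d] (gammaLevel Ω s t) := by
  rw [levelRatio, ← mul_div_assoc]
  refine ENNReal.div_le_of_le_mul ?_
  rw [mul_comm (μH[d] (gammaLevel Ω s t))]
  exact rpow_mul_hausdorffMeasure_distLevel_le hd hs hst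

theorem antitoneOn_levelRatio (hΩ : IsOpen Ω) (hd : 0 ≤ d) :
    AntitoneOn (levelRatio Ω d) (Ioi 0) := by
  intro s hs t _ hst
  change _ ≤ μH[d] (distLevel Ω s) / ENNReal.ofReal s ^ d
  rw [ENNReal.le_div_iff_mul_le (Or.inl (ENNReal.ofReal_rpow_ne_zero hs))
    (Or.inl (ENNReal.ofReal_rpow_ne_top hd)), mul_comm]
  exact (rpow_mul_levelRatio_le hd hs hst).trans
    (measure_mono (gammaLevel_subset_distLevel hΩ hs hst))

theorem hausdorffMeasure_distLevel_diff_eq_zero (hΩ : IsOpen Ω) (hd : 0 ≤ d) {s : ℝ}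
    (hs : 0 < s) (hfin : μH[d] (distLevel Ω s) ≠ ∞)
    (hcont : ContinuousWithinAt (levelRatio Ω d) (Ioi s) s) :
    μH[d] (distLevel Ω s \ {y | ∃ t, s < t ∧ y ∈ gammaLevel Ω s t}) = 0 := by
  set m := μH[d] (distLevel Ω s)
  have hbound : ∀ t ∈ Ioi s, μH[d] (distLevel Ω s \ {y | ∃ t, s < t ∧ y ∈ gammaLevel Ω s t}) ≤
      m - ENNReal.ofReal s ^ d * levelRatio Ω d t := by
    intro t (hst : s < t)
    have hΓ := gammaLevel_subset_distLevel hΩ hs hst.le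
    calc _ ≤ μH[d] (distLevel Ω s \ gammaLevel Ω s t) :=
          measure_mono (sdiff_subset_sdiff_right fun y hy => by exact ⟨t, hst, hy⟩)
      _ = m - μH[d] (gammaLevel Ω s t) :=
          measure_sdiff hΓ (measurableSet_gammaLevel hΩ s (hs.trans hst)).nullMeasurableSet
            (ne_top_of_le_ne_top hfin (measure_mono hΓ))
      _ ≤ m - ENNReal.ofReal s ^ d * levelRatio Ω d t :=
          tsub_le_tsub_left (rpow_mul_levelRatio_le hd hs hst.le) m
  have hlim : Tendsto (fun t => m - ENNReal.ofReal s ^ d * levelRatio Ω d t) (𝓝[>] s)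
      (𝓝 (m - ENNReal.ofReal s ^ d * levelRatio Ω d s)) :=
    ENNReal.Tendsto.sub tendsto_const_nhds
      (ENNReal.Tendsto.const_mul hcont (Or.inr (ENNReal.ofReal_rpow_ne_top hd))) (Or.inl hfin)
  rw [levelRatio, ENNReal.mul_div_cancel (ENNReal.ofReal_rpow_ne_zero hs)
    (ENNReal.ofReal_rpow_ne_top hd), tsub_self] at hlim
  exact nonpos_iff_eq_zero.1 (ge_of_tendsto hlim (eventually_nhdsWithin_of_forall hbound))

theorem ae_continuousWithinAt_levelRatio (hΩ : IsOpen Ω) (hd : 0 ≤ d) :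
    ∀ᵐ s, 0 < s → ContinuousWithinAt (levelRatio Ω d) (Ioi s) s := by
  filter_upwards [(antitoneOn_levelRatio hΩ hd).countable_not_continuousWithinAt.ae_notMem
    volume] with s hs hpos
  exact (not_not.1 fun h => hs ⟨hpos, h⟩).mono (Ioi_subset_Ioi hpos.le)

theorem packingNumber_distLevel_mul_le (μ : Measure E) [μ.IsAddHaarMeasure] (hΩ : IsOpen Ω)
    {s : ℝ} {ε : ℝ≥0} (hεs : (ε : ℝ) < s) :
    (packingNumber ε (distLevel Ω s) : ℝ≥0∞) * μ (ball 0 (ε / 4)) ≤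
      μ.restrict Ω ((infDist · (frontier Ω)) ⁻¹' Ioc (s - ε) s) := by
  have hs : 0 < s := ε.2.trans_lt hεs
  set r := s - ε / 2 with hr_def
  have hε : (0 : ℝ) ≤ ε := ε.2
  have hr : 0 < r := by linarith
  choose! x hx hxy using fun y (hy : y ∈ distLevel Ω s) =>
    isClosed_frontier.exists_infDist_eq_dist_of_infDist_pos (hy.2.symm ▸ hs)
  set q : E → E := fun p => x p + (r / s) • (p - x p)
  have hq_mem : ∀ p ∈ distLevel Ω s, q p ∈ distLevel Ω r := fun p hp =>
    homothety_mem_distLevel hΩ (hx p hp) hp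
      (by rw [← dist_eq_norm, dist_comm, ← hxy p hp, hp.2]) hr (by linarith)
  have hq_dist : ∀ p₁ ∈ distLevel Ω s, ∀ p₂ ∈ distLevel Ω s,
      r / s * dist p₁ p₂ ≤ dist (q p₁) (q p₂) := fun p₁ h₁ p₂ h₂ =>
    mul_dist_le_dist_homothety (by positivity) ((div_le_one hs).2 (by linarith))
      (hxy p₁ h₁ ▸ infDist_le_dist_of_mem (hx p₂ h₂))
      (hxy p₂ h₂ ▸ infDist_le_dist_of_mem (hx p₁ h₁))
  have hball : ∀ p ∈ distLevel Ω s, ball (q p) (ε / 4) ⊆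
      Ω ∩ (infDist · (frontier Ω)) ⁻¹' Ioc (s - ε) s := fun p hp =>
    (ball_subset_inter_preimage_Ioo hΩ (hq_mem p hp) (by linarith)).trans
      (inter_subset_inter_right _ (preimage_mono fun _ h => ⟨by linarith [h.1], by linarith [h.2]⟩))
  rw [packingNumber_mul_le_iff]
  intro C hC hCsep
  refine Set.PairwiseDisjoint.encard_mul_le_measure (f := fun p => ball (q p) (ε / 4))
    (fun p₁ h₁ p₂ h₂ hne => ball_disjoint_ball ?_) (fun _ _ => measurableSet_ball)
    (fun p hp => ?_) (fun p hp => (hball p (hC hp)).trans inter_subset_right)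
  · have hsep : (ε : ℝ) < dist p₁ p₂ := by
      have : (ε : ℝ≥0∞) < edist p₁ p₂ := hCsep h₁ h₂ hne
      rw [edist_dist, ← ENNReal.ofReal_coe_nnreal] at this
      exact (ENNReal.ofReal_lt_ofReal_iff_of_nonneg hε).1 this
    have hq := hq_dist p₁ (hC h₁) p₂ (hC h₂)
    have hmono : r / s * ε ≤ r / s * dist p₁ p₂ := by gcongr
    have hhalf : (ε : ℝ) / 2 ≤ r / s * ε := by
      rw [div_mul_eq_mul_div, le_div_iff₀ hs]; nlinarith
    linarith
  · rw [Measure.restrict_eq_self μ ((hball p (hC hp)).trans inter_subset_left)]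
    exact (Measure.addHaar_ball_center μ (q p) _).ge

end InnerProductSpace

section FiniteDimensional

variable {E : Type*} [NormedAddCommGroup E] [InnerProductSpace ℝ E] [FiniteDimensional ℝ E]
  [MeasurableSpace E] [BorelSpace E] {Ω : Set E}

theorem hausdorffMeasure_distLevel_lt_top (μ : Measure E) [μ.IsAddHaarMeasure] {n : ℕ}
    (hn : Module.finrank ℝ E = n + 1) (hΩ : IsOpen Ω) {s : ℝ} (hs : 0 < s) {C : ℝ≥0}
    (hslab : ∀ᶠ ε : ℝ≥0 in 𝓝 0,
      μ.restrict Ω ((infDist · (frontier Ω)) ⁻¹' Ioc (s - ε) s) ≤ C * ε) :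
    μH[n] (distLevel Ω s) < ∞ := by
  set B := μ (ball (0 : E) 1)
  have hB₀ : B ≠ 0 := (measure_ball_pos μ 0 one_pos).ne'
  have hB : B ≠ ∞ := measure_ball_lt_top.ne
  have hsmall : ∀ᶠ ε : ℝ≥0 in 𝓝 0, (ε : ℝ) < s :=
    (NNReal.continuous_coe.tendsto 0).eventually (gt_mem_nhds (by simpa using hs))
  refine (hausdorffMeasure_le_of_packingNumber_mul_le (M := 4 * 8 ^ n * C / B) n.cast_nonneg
    ?_).trans_lt (ENNReal.div_lt_top (by finiteness) hB₀)
  filter_upwards [nhdsWithin_le_nhds (hslab.and hsmall), self_mem_nhdsWithin]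
    with ε ⟨hεC, hεs⟩ (hε : 0 < ε)
  have hpack := (packingNumber_distLevel_mul_le μ hΩ hεs).trans hεC
  rw [Measure.addHaar_ball_of_pos μ 0 (by positivity), hn,
    show ((ε : ℝ) / 4) ^ (n + 1) = ((ε / 4) ^ (n + 1) : ℝ≥0) by push_cast; ring,
    ENNReal.ofReal_coe_nnreal] at hpack
  -- a packing at scale `ε` of `∂Ω_s` costs `(2ε)ⁿ = 4 · 8ⁿ (ε/4)ⁿ⁺¹ / ε` per point
  have hscale : (2 * (ε : ℝ≥0∞)) ^ (n : ℝ) * ε = ((ε / 4) ^ (n + 1) : ℝ≥0) * (4 * 8 ^ n) := by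
    have : ((2 * ε) ^ n * ε : ℝ≥0) = (ε / 4) ^ (n + 1) * (4 * 8 ^ n) := by
      rw [show 2 * ε = ε / 4 * 8 by rw [div_mul_eq_mul_div]; ring, mul_pow, pow_succ]
      ring
    rw [ENNReal.rpow_natCast]
    exact_mod_cast this
  rw [ENNReal.le_div_iff_mul_le (Or.inl hB₀) (Or.inl hB),
    ← ENNReal.mul_le_mul_iff_left (ENNReal.coe_ne_zero.2 hε.ne') ENNReal.coe_ne_top]
  set P := (packingNumber ε (distLevel Ω s) : ℝ≥0∞)
  calc P * (2 * ε) ^ (n : ℝ) * B * ε = P * ((2 * ε) ^ (n : ℝ) * ε) * B := by ring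
    _ = P * (((ε / 4) ^ (n + 1) : ℝ≥0) * B) * (4 * 8 ^ n) := by rw [hscale]; ring
    _ ≤ C * ε * (4 * 8 ^ n) := mul_le_mul_of_nonneg_right hpack zero_le
    _ = 4 * 8 ^ n * C * ε := by ring

theorem ae_hausdorffMeasure_distLevel_lt_top (μ : Measure E) [μ.IsAddHaarMeasure] {n : ℕ}
    (hn : Module.finrank ℝ E = n + 1) (hΩ : IsOpen Ω) (hμΩ : μ Ω ≠ ∞) :
    ∀ᵐ s, 0 < s → μH[n] (distLevel Ω s) < ∞ := by
  have : IsFiniteMeasure (μ.restrict Ω) := isFiniteMeasure_restrict.2 hμΩ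
  have hmono : Monotone fun σ => (μ.restrict Ω).real ((infDist · (frontier Ω)) ⁻¹' Iic σ) :=
    fun a b hab => measureReal_mono (preimage_mono (Iic_subset_Iic.2 hab))
  filter_upwards [hmono.ae_differentiableAt] with s hs hpos
  obtain ⟨C, hC⟩ := eventually_measure_preimage_Ioc_le_of_differentiableAt
    (continuous_infDist_pt _).measurable hs
  exact hausdorffMeasure_distLevel_lt_top μ hn hΩ hpos hC

end FiniteDimensional

theorem stmt_14_general (n : ℕ)
    (Ω : Set (EuclideanSpace ℝ (Fin (n + 1))))
    (hΩopen : IsOpen Ω)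
    (hvol : volume Ω < ⊤)
    (u : EuclideanSpace ℝ (Fin (n + 1)) → ℝ)
    (hu : ∀ y, u y = Metric.infDist y (frontier Ω)) :
    ∀ᵐ s ∂(volume.restrict (Set.Ioi (0 : ℝ))),
      μH[(n : ℝ)] ({y | y ∈ Ω ∧ u y = s} \
        {y | ∃ t, s < t ∧ ∃ x z, x ∈ frontier Ω ∧ z ∈ Ω ∧ u z = t ∧ ‖x - z‖ = t ∧
          y = x + (s / t) • (z - x)}) = 0 := by
  obtain rfl : u = (infDist · (frontier Ω)) := funext hu
  filter_upwards [ae_restrict_mem measurableSet_Ioi,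
    ae_restrict_of_ae (ae_hausdorffMeasure_distLevel_lt_top volume finrank_euclideanSpace_fin
      hΩopen hvol.ne),
    ae_restrict_of_ae (ae_continuousWithinAt_levelRatio hΩopen n.cast_nonneg)]
    with s hs hfin hcont
  exact hausdorffMeasure_distLevel_diff_eq_zero hΩopen n.cast_nonneg hs (hfin hs).ne (hcont hs)

/-- Claim (3.28): for a.e. `s > 0`, `ℋⁿ(∂Ω_s \ Γ_s^+) = 0`, i.e.
`ℋⁿ(Γ_s^+) = ℋⁿ(∂Ω_s)`. -/
theorem stmt_14 (n : ℕ) (hn : 1 ≤ n)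
    (Ω : Set (EuclideanSpace ℝ (Fin (n + 1))))
    (hΩopen : IsOpen Ω) (hΩne : Ω.Nonempty) (hfr : (frontier Ω).Nonempty)
    (hvol : volume Ω < ⊤)
    (u : EuclideanSpace ℝ (Fin (n + 1)) → ℝ)
    (hu : ∀ y, u y = Metric.infDist y (frontier Ω)) :
    ∀ᵐ s ∂(volume.restrict (Set.Ioi (0 : ℝ))),
      μH[(n : ℝ)] ({y | y ∈ Ω ∧ u y = s} \
        {y | ∃ t, s < t ∧ ∃ x z, x ∈ frontier Ω ∧ z ∈ Ω ∧ u z = t ∧ ‖x - z‖ = t ∧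
          y = x + (s / t) • (z - x)}) = 0 :=
  stmt_14_general n Ω hΩopen hvol u hu
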